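/- For all moulds P, Q ∈ ARI, the operator D = −arit(P) + ad(P) satisfies D(dur(Q)) = dur(D(Q)) + lu(Q, dur(P)). (This is the identity expressing that the derivation −arit(P) + ad(P) of ARI_lu extends to the extra generator a, taking the value lu(P,a) = dur(P) on a.) -/
import Mathlib


/-!
Moulds are modelled as families `P = (P_r)_{r ≥ 0}` of ℚ-valued functions of `r`
rational variables; identities of rational functions are expressed as pointwise
identities, guarded (where divisions genuinely occur) by the genericity
condition that all consecutive block sums of the variables are nonzero.
-/

/-- A mould: for each depth `r`, a function of `r` variables `u_1, …, u_r`. -/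
abbrev Mould : Type := (r : ℕ) → (Fin r → ℚ) → ℚ

namespace Mould

/-- Membership in `ARI`: vanishing constant term (depth-0 part equal to `0`). -/
def MemARI (P : Mould) : Prop := ∀ u : Fin 0 → ℚ, P 0 u = 0

/-- The first `i` letters of the word `u`. -/
def take {r : ℕ} (u : Fin r → ℚ) (i : ℕ) (h : i ≤ r) : Fin i → ℚ :=
  fun j => u ⟨j.1, by have := j.2; omega⟩

/-- The letters of the word `u` from position `i` on. -/
def drop {r : ℕ} (u : Fin r → ℚ) (i : ℕ) : Fin (r - i) → ℚ :=
  fun j => u ⟨i + j.1, by have := j.2; omega⟩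

/-- Mould multiplication `mu`. -/
def mu (P Q : Mould) : Mould := fun r u =>
  ∑ i : Fin (r + 1), P i.1 (take u i.1 (by have := i.2; omega)) * Q (r - i.1) (drop u i.1)

/-- The bracket `lu` associated to `mu`. -/
def lu (P Q : Mould) : Mould := fun r u => mu P Q r u - mu Q P r u

/-- `dur`: multiplication by `u_1 + ⋯ + u_r`. -/
def dur (P : Mould) : Mould := fun r u => (∑ j, u j) * P r u

/-- `dar`: multiplication by `u_1 ⋯ u_r`. -/
def dar (P : Mould) : Mould := fun r u => (∏ j, u j) * P r u

/-- `dur⁻¹`: division by `u_1 + ⋯ + u_r`. -/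
def durInv (P : Mould) : Mould := fun r u => P r u / (∑ j, u j)

/-- `dar⁻¹`: division by `u_1 ⋯ u_r`. -/
def darInv (P : Mould) : Mould := fun r u => P r u / (∏ j, u j)

/-- `Δ = dar ∘ dur`: multiplication by `u_1 ⋯ u_r (u_1 + ⋯ + u_r)`. -/
def delta (P : Mould) : Mould := dar (dur P)

/-- `Δ⁻¹`: division by `u_1 ⋯ u_r (u_1 + ⋯ + u_r)`. -/
def deltaInv (P : Mould) : Mould := darInv (durInv P)

/-- The word `a⌈c`, for the decomposition `a = (u_1,…,u_i)`, `b = (u_{i+1},…,u_k)`,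
`c = (u_{k+1},…,u_r)` (0-indexed: `a` = positions `< i`, `b` = positions `i..k-1`,
`c` = positions `k..r-1`): `a` followed by `c` with the sum of the letters of `b`
added to the first letter of `c`. -/
def flexUpper {r : ℕ} (u : Fin r → ℚ) (i k : ℕ) (hik : i < k) (hkr : k < r) :
    Fin (i + (r - k)) → ℚ := fun j =>
  if hj : j.1 < i then u ⟨j.1, by omega⟩
  else if hj2 : j.1 = i then ∑ m : Fin (k + 1 - i), u ⟨i + m.1, by have := m.2; omega⟩
  else u ⟨k + (j.1 - i), by have := j.2; omega⟩

/-- The word `a⌉c`: `a` with the sum of the letters of `b` added to its last letter,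
followed by `c`. -/
def flexLower {r : ℕ} (u : Fin r → ℚ) (i k : ℕ) (hi : 0 < i) (hik : i < k) (hkr : k ≤ r) :
    Fin (i + (r - k)) → ℚ := fun j =>
  if hj : j.1 < i - 1 then u ⟨j.1, by omega⟩
  else if hj2 : j.1 = i - 1 then
    ∑ m : Fin (k - (i - 1)), u ⟨(i - 1) + m.1, by have := m.2; omega⟩
  else u ⟨k + (j.1 - i), by have := j.2; omega⟩

/-- The middle word `b = (u_{i+1},…,u_k)` of a decomposition. -/
def blockWord {r : ℕ} (u : Fin r → ℚ) (i k : ℕ) (h : k ≤ r) : Fin (k - i) → ℚ :=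
  fun m => u ⟨i + m.1, by have := m.2; omega⟩

/-- Ecalle's derivation `arit(P)` applied to `M`:
`(arit(P)·M)(u) = Σ M(a⌈c)P(b) − Σ M(a⌉c)P(b)`, the first sum over decompositions
with `b, c` nonempty, the second over decompositions with `a, b` nonempty. -/
def arit (P M : Mould) : Mould := fun r u =>
  (∑ i : Fin (r + 1), ∑ k : Fin (r + 1),
    if h : i.1 < k.1 ∧ k.1 < r then
      M (i.1 + (r - k.1)) (flexUpper u i.1 k.1 h.1 h.2)
        * P (k.1 - i.1) (blockWord u i.1 k.1 (le_of_lt h.2))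
    else 0)
  - ∑ i : Fin (r + 1), ∑ k : Fin (r + 1),
    if h : 0 < i.1 ∧ i.1 < k.1 ∧ k.1 ≤ r then
      M (i.1 + (r - k.1)) (flexLower u i.1 k.1 h.1 h.2.1 h.2.2)
        * P (k.1 - i.1) (blockWord u i.1 k.1 h.2.2)
    else 0

/-- `Darit(P) = −dar ∘ (arit(Δ⁻¹(P)) − ad(Δ⁻¹(P))) ∘ dar⁻¹`, where `ad(X)·Y = lu(X,Y)`. -/
def Darit (P Q : Mould) : Mould := fun r u =>
  -(dar (fun s v => arit (deltaInv P) (darInv Q) s v - lu (deltaInv P) (darInv Q) s v) r u)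

/-- The `ari`-bracket: `ari(P,Q) = arit(Q)·P − arit(P)·Q + lu(P,Q)`. -/
def ari (P Q : Mould) : Mould := fun r u =>
  arit Q P r u - arit P Q r u + lu P Q r u

/-- The `Dari`-bracket: `Dari(P,Q) = Darit(P)·Q − Darit(Q)·P`. -/
def Dari (P Q : Mould) : Mould := fun r u => Darit P Q r u - Darit Q P r u

/-- The `push` operator: `push(P)(u_1,…,u_r) = P(−u_1−⋯−u_r, u_1,…,u_{r−1})`. -/
def push (P : Mould) : Mould := fun r u =>
  P r (fun j => if j.1 = 0 then -(∑ k, u k) else u ⟨j.1 - 1, by have := j.2; omega⟩)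

/-- The `swap` operator: `swap(P)(v_1,…,v_r) = P(v_r, v_{r−1}−v_r, …, v_1−v_2)`. -/
def swap (P : Mould) : Mould := fun r u =>
  P r (fun j =>
    if hj : j.1 = 0 then u ⟨r - 1, by have := j.2; omega⟩
    else u ⟨r - 1 - j.1, by have := j.2; omega⟩ - u ⟨r - j.1, by have := j.2; omega⟩)

/-- The mould `B = ma(b)` concentrated in depth 1, with `B(u_1) = 1`. -/
def Bm : Mould := fun r _ => if r = 1 then 1 else 0

/-- The mould `B₁ = ma([b,a])` concentrated in depth 1, with `B₁(u_1) = u_1`. -/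
def B1 : Mould := fun r u => if h : r = 1 then u ⟨0, by omega⟩ else 0

/-- A tuple of variables is *generic* when every consecutive block sum
`u_{i+1} + ⋯ + u_{j+1}` (`0 ≤ i ≤ j < r`) is nonzero; two rational-function
valued moulds are equal iff they agree at all generic tuples, and all
denominators occurring in the flexion operations are such block sums. -/
def Generic {r : ℕ} (u : Fin r → ℚ) : Prop :=
  ∀ (i j : ℕ) (_ : i ≤ j) (_ : j < r),
    (∑ m : Fin (j + 1 - i), u ⟨i + m.1, by have := m.2; omega⟩) ≠ 0

/-- A mould is polynomial-valued if each of its components is (the evaluation of)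
a polynomial. -/
def IsPolynomial (P : Mould) : Prop :=
  ∀ r : ℕ, ∃ p : MvPolynomial (Fin r) ℚ, ∀ u : Fin r → ℚ, P r u = MvPolynomial.eval u p

/-- The truncated word `(u_1,…,u_{r-1})`. -/
def init {r : ℕ} (u : Fin r → ℚ) : Fin (r - 1) → ℚ := take u (r - 1) (Nat.sub_le r 1)

/-- The shifted word `(u_2,…,u_r)`. -/
def tail {r : ℕ} (u : Fin r → ℚ) : Fin (r - 1) → ℚ := drop u 1

/-- The word `(u_2, …, u_{r−1}, −u_1−⋯−u_{r−1})`. -/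
def pushTail {r : ℕ} (u : Fin r → ℚ) : Fin (r - 1) → ℚ := fun j =>
  if j.1 = r - 2 then -(∑ m : Fin (r - 1), u ⟨m.1, by have := m.2; omega⟩)
  else u ⟨j.1 + 1, by have := j.2; omega⟩

/-- Extension of a word to a function on `ℕ` (by zero). -/
def ext {r : ℕ} (u : Fin r → ℚ) : ℕ → ℚ := fun n => if h : n < r then u ⟨n, h⟩ else 0

theorem ext_lt {r : ℕ} (u : Fin r → ℚ) {n : ℕ} (h : n < r) : ext u n = u ⟨n, h⟩ :=
  dif_pos h

theorem sum_eq_sum_ext {r : ℕ} (u : Fin r → ℚ) :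
    ∑ j, u j = ∑ j ∈ Finset.range r, ext u j := by
  rw [← Fin.sum_univ_eq_sum_range]
  exact Finset.sum_congr rfl fun j _ => (ext_lt u j.2).symm

theorem split_sum (v : ℕ → ℚ) (i r : ℕ) (h : i ≤ r) :
    (∑ m ∈ Finset.range i, v m) + ∑ m ∈ Finset.range (r - i), v (i + m)
      = ∑ m ∈ Finset.range r, v m := by
  rw [← Finset.sum_range_add, show i + (r - i) = r from by omega]

theorem sum_take_drop {r : ℕ} (u : Fin r → ℚ) (i : ℕ) (h : i ≤ r) :
    (∑ j, take u i h j) + (∑ j, drop u i j) = ∑ j, u j := by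
  have h1 : ∑ j, take u i h j = ∑ m ∈ Finset.range i, ext u m := by
    rw [← Fin.sum_univ_eq_sum_range]
    exact Finset.sum_congr rfl fun j _ => by
      rw [ext_lt u (show j.1 < r by omega)]; rfl
  have h2 : ∑ j, drop u i j = ∑ m ∈ Finset.range (r - i), ext u (i + m) := by
    rw [← Fin.sum_univ_eq_sum_range]
    exact Finset.sum_congr rfl fun j _ => by
      rw [ext_lt u (show i + j.1 < r by omega)]; rfl
  rw [h1, h2, split_sum (ext u) i r h, sum_eq_sum_ext]

theorem sum_flexUpper {r : ℕ} (u : Fin r → ℚ) (i k : ℕ) (hik : i < k) (hkr : k < r) :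
    ∑ j, flexUpper u i k hik hkr j = ∑ j, u j := by
  have hmid : (∑ m : Fin (k + 1 - i), u ⟨i + m.1, by have := m.2; omega⟩)
      = ∑ m ∈ Finset.range (k + 1 - i), ext u (i + m) := by
    rw [← Fin.sum_univ_eq_sum_range]
    exact Finset.sum_congr rfl fun m _ => by
      rw [ext_lt u (show i + m.1 < r by have := m.2; omega)]
  have h1 : ∑ j, flexUpper u i k hik hkr j
      = ∑ j ∈ Finset.range (i + (r - k)),
          (if j < i then ext u j
           else if j = i then ∑ m ∈ Finset.range (k + 1 - i), ext u (i + m)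
           else ext u (k + (j - i))) := by
    rw [← Fin.sum_univ_eq_sum_range]
    refine Finset.sum_congr rfl fun j _ => ?_
    unfold flexUpper
    split_ifs with hj hj2
    · rw [ext_lt u (show j.1 < r by omega)]
    · exact hmid
    · rw [ext_lt u (show k + (j.1 - i) < r by have := j.2; omega)]
  rw [h1]
  rw [show i + (r - k) = i + (1 + (r - (k + 1))) from by omega]
  rw [Finset.sum_range_add, Finset.sum_range_add, Finset.sum_range_one]
  have e1 : ∀ j ∈ Finset.range i,
      (if j < i then ext u j
       else if j = i then ∑ m ∈ Finset.range (k + 1 - i), ext u (i + m)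
       else ext u (k + (j - i))) = ext u j := fun j hj => by
    rw [if_pos (Finset.mem_range.mp hj)]
  have e2 : (if i + 0 < i then ext u (i + 0)
       else if i + 0 = i then ∑ m ∈ Finset.range (k + 1 - i), ext u (i + m)
       else ext u (k + (i + 0 - i))) = ∑ m ∈ Finset.range (k + 1 - i), ext u (i + m) := by
    rw [if_neg (by omega), if_pos (by omega)]
  have e3 : ∀ x ∈ Finset.range (r - (k + 1)),
      (if i + (1 + x) < i then ext u (i + (1 + x))
       else if i + (1 + x) = i then ∑ m ∈ Finset.range (k + 1 - i), ext u (i + m)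
       else ext u (k + (i + (1 + x) - i))) = ext u ((k + 1) + x) := fun x _ => by
    rw [if_neg (by omega), if_neg (by omega)]
    congr 1
    omega
  rw [Finset.sum_congr rfl e1, e2, Finset.sum_congr rfl e3, ← add_assoc,
    split_sum (ext u) i (k + 1) (by omega), split_sum (ext u) (k + 1) r (by omega),
    sum_eq_sum_ext]

theorem sum_flexLower {r : ℕ} (u : Fin r → ℚ) (i k : ℕ) (hi : 0 < i) (hik : i < k)
    (hkr : k ≤ r) :
    ∑ j, flexLower u i k hi hik hkr j = ∑ j, u j := by
  have hmid : (∑ m : Fin (k - (i - 1)), u ⟨(i - 1) + m.1, by have := m.2; omega⟩)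
      = ∑ m ∈ Finset.range (k - (i - 1)), ext u ((i - 1) + m) := by
    rw [← Fin.sum_univ_eq_sum_range]
    exact Finset.sum_congr rfl fun m _ => by
      rw [ext_lt u (show (i - 1) + m.1 < r by have := m.2; omega)]
  have h1 : ∑ j, flexLower u i k hi hik hkr j
      = ∑ j ∈ Finset.range (i + (r - k)),
          (if j < i - 1 then ext u j
           else if j = i - 1 then ∑ m ∈ Finset.range (k - (i - 1)), ext u ((i - 1) + m)
           else ext u (k + (j - i))) := by
    rw [← Fin.sum_univ_eq_sum_range]
    refine Finset.sum_congr rfl fun j _ => ?_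
    unfold flexLower
    split_ifs with hj hj2
    · rw [ext_lt u (show j.1 < r by omega)]
    · exact hmid
    · rw [ext_lt u (show k + (j.1 - i) < r by have := j.2; omega)]
  rw [h1]
  rw [show i + (r - k) = (i - 1) + (1 + (r - k)) from by omega]
  rw [Finset.sum_range_add, Finset.sum_range_add, Finset.sum_range_one]
  have e1 : ∀ j ∈ Finset.range (i - 1),
      (if j < i - 1 then ext u j
       else if j = i - 1 then ∑ m ∈ Finset.range (k - (i - 1)), ext u ((i - 1) + m)
       else ext u (k + (j - i))) = ext u j := fun j hj => by
    rw [if_pos (Finset.mem_range.mp hj)]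
  have e2 : (if (i - 1) + 0 < i - 1 then ext u ((i - 1) + 0)
       else if (i - 1) + 0 = i - 1 then ∑ m ∈ Finset.range (k - (i - 1)), ext u ((i - 1) + m)
       else ext u (k + ((i - 1) + 0 - i)))
      = ∑ m ∈ Finset.range (k - (i - 1)), ext u ((i - 1) + m) := by
    rw [if_neg (by omega), if_pos (by omega)]
  have e3 : ∀ x ∈ Finset.range (r - k),
      (if (i - 1) + (1 + x) < i - 1 then ext u ((i - 1) + (1 + x))
       else if (i - 1) + (1 + x) = i - 1 then
         ∑ m ∈ Finset.range (k - (i - 1)), ext u ((i - 1) + m)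
       else ext u (k + ((i - 1) + (1 + x) - i))) = ext u (k + x) := fun x _ => by
    rw [if_neg (by omega), if_neg (by omega)]
    congr 1
    omega
  rw [Finset.sum_congr rfl e1, e2, Finset.sum_congr rfl e3, ← add_assoc,
    split_sum (ext u) (i - 1) k (by omega), split_sum (ext u) k r (by omega),
    sum_eq_sum_ext]

theorem arit_dur (P Q : Mould) (r : ℕ) (u : Fin r → ℚ) :
    arit P (dur Q) r u = (∑ j, u j) * arit P Q r u := by
  simp only [arit, dur]
  rw [mul_sub, Finset.mul_sum, Finset.mul_sum]
  congr 1
  · refine Finset.sum_congr rfl fun i _ => ?_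
    rw [Finset.mul_sum]
    refine Finset.sum_congr rfl fun k _ => ?_
    by_cases h : i.1 < k.1 ∧ k.1 < r
    · rw [dif_pos h, dif_pos h, sum_flexUpper u i.1 k.1 h.1 h.2]
      ring
    · rw [dif_neg h, dif_neg h, mul_zero]
  · refine Finset.sum_congr rfl fun i _ => ?_
    rw [Finset.mul_sum]
    refine Finset.sum_congr rfl fun k _ => ?_
    by_cases h : 0 < i.1 ∧ i.1 < k.1 ∧ k.1 ≤ r
    · rw [dif_pos h, dif_pos h, sum_flexLower u i.1 k.1 h.1 h.2.1 h.2.2]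
      ring
    · rw [dif_neg h, dif_neg h, mul_zero]

theorem lu_dur (P Q : Mould) (r : ℕ) (u : Fin r → ℚ) :
    lu P (dur Q) r u = (∑ j, u j) * lu P Q r u + lu Q (dur P) r u := by
  simp only [lu, mu, dur]
  rw [mul_sub, Finset.mul_sum, Finset.mul_sum, ← Finset.sum_sub_distrib,
    ← Finset.sum_sub_distrib, ← Finset.sum_sub_distrib, ← Finset.sum_add_distrib]
  refine Finset.sum_congr rfl fun i _ => ?_
  have hs := sum_take_drop u i.1 (show i.1 ≤ r by have := i.2; omega)
  rw [← hs]
  ring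

end Mould

open Mould in
/-- For all moulds `P, Q ∈ ARI`, the operator
`D = −arit(P) + ad(P)` satisfies `D(dur(Q)) = dur(D(Q)) + lu(Q, dur(P))`.
This expresses that the derivation `−arit(P) + ad(P)` of `ARI_lu` extends to the
extra generator `a` (with `[Q,a] = dur(Q)`), taking the value
`lu(P,a) = dur(P)` on `a`. -/
theorem arit_ad_extends_to_a (P Q : Mould) (hP : MemARI P) (hQ : MemARI Q) :
    ∀ (r : ℕ) (u : Fin r → ℚ),
      -(arit P (dur Q) r u) + lu P (dur Q) r u
        = dur (fun s v => -(arit P Q s v) + lu P Q s v) r u + lu Q (dur P) r u := by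
  intro r u
  rw [arit_dur P Q r u, lu_dur P Q r u]
  show _ = (∑ j, u j) * (-(arit P Q r u) + lu P Q r u) + lu Q (dur P) r u
  ring
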